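/- arXiv:1907.01146 — 2 statements merged into one kernel-verified Lean document; each statement's English description precedes it below -/
import Mathlib

section
/- For a continuous linear automorphism T of a Banach space B, T has the shadowing property if and only if the induced operator T_∞ on ℓ^∞(ℤ, B), defined by (T_∞((x_k)))_n = x_{n+1} − T x_n, is surjective. -/
/-!
If `T` has the shadowing property, a bounded sequence `z` is hit by `T_∞` as follows: scale `z`
into a `δ`-pseudo-orbit defect, solve the recursion `x (n + 1) - T (x n) = c • z n` exactly (always
possible since `T` is invertible), and subtract a shadowing orbit; the difference is bounded and
solves the same recursion. Conversely, if `T_∞` is onto, the open mapping theorem gives every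
bounded sequence a preimage of at most `M` times its norm; so the defect of a `δ`-pseudo-orbit `x`
has a preimage `f` with `‖f‖ ≤ M δ`, and `x - f` is a true orbit within `M δ` of `x`.
-/

/-- Shadowing property for a continuous linear automorphism. -/
def Shadowing {X : Type*} [SeminormedAddCommGroup X] [Module ℝ X] (T : X ≃L[ℝ] X) : Prop :=
  ∀ ε > (0 : ℝ), ∃ δ > (0 : ℝ), ∀ x : ℤ → X,
    (∀ n : ℤ, ‖x (n + 1) - T (x n)‖ < δ) →
    ∃ y : X, ∀ n : ℤ, ‖x n - (T ^ n) y‖ < ε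

/-- The space of bounded `B`-valued bisequences. -/
def BddSeq (B : Type*) [NormedAddCommGroup B] : Type _ :=
  {x : ℤ → B // ∃ C : ℝ, ∀ n : ℤ, ‖x n‖ ≤ C}

/-- The operator `T_∞` on bounded bisequences, `(T_∞ x)_n = x_{n+1} - T x_n`. -/
def Tinf {B : Type*} [NormedAddCommGroup B] [NormedSpace ℝ B] (T : B ≃L[ℝ] B)
    (x : BddSeq B) : BddSeq B :=
  ⟨fun n => x.1 (n + 1) - T (x.1 n), by
    obtain ⟨C, hC⟩ := x.2
    refine ⟨C + ‖(T : B →L[ℝ] B)‖ * C, fun n => ?_⟩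
    calc ‖x.1 (n + 1) - T (x.1 n)‖ ≤ ‖x.1 (n + 1)‖ + ‖T (x.1 n)‖ := norm_sub_le _ _
      _ ≤ C + ‖(T : B →L[ℝ] B)‖ * C := by
          refine add_le_add (hC _) ?_
          exact le_trans ((T : B →L[ℝ] B).le_opNorm _)
            (mul_le_mul_of_nonneg_left (hC _) (norm_nonneg _))⟩

open BoundedContinuousFunction Function

theorem Int.exists_forall_add_one_sub_eq {G : Type*} [AddCommGroup G] (d : ℤ → G) :
    ∃ s : ℤ → G, ∀ n, s (n + 1) - s n = d n := by
  refine ⟨fun n => ∑ k ∈ Finset.Ico 0 n, d k - ∑ k ∈ Finset.Ico n 0, d k, fun n => ?_⟩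
  dsimp only
  rcases le_or_gt 0 n with hn | hn
  · rw [← Finset.insert_Ico_right_eq_Ico_add_one hn, Finset.sum_insert Finset.right_notMem_Ico,
      Finset.Ico_eq_empty_of_le hn, Finset.Ico_eq_empty_of_le (show (0 : ℤ) ≤ n + 1 by omega)]
    abel
  · rw [← Finset.insert_Ico_add_one_left_eq_Ico hn, Finset.sum_insert (by simp),
      Finset.Ico_eq_empty_of_le hn.le, Finset.Ico_eq_empty_of_le (show n + 1 ≤ 0 by omega)]
    abel

namespace ContinuousLinearEquiv

variable {R M : Type*} [Semiring R] [TopologicalSpace M] [AddCommGroup M] [Module R M]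

theorem zpow_add_one_apply (T : M ≃L[R] M) (n : ℤ) (y : M) :
    (T ^ (n + 1)) y = T ((T ^ n) y) := by
  rw [add_comm, zpow_one_add]; rfl

theorem eq_zpow_apply_of_forall_add_one (T : M ≃L[R] M) {w : ℤ → M}
    (hw : ∀ n, w (n + 1) = T (w n)) (n : ℤ) : w n = (T ^ n) (w 0) := by
  induction n using Int.induction_on with
  | zero => rfl
  | succ k ih => rw [hw k, ih, zpow_add_one_apply]
  | pred k ih =>
    rw [← T.symm_apply_apply (w _), ← hw, sub_add_cancel, ih,
      ← T.symm_apply_apply ((T ^ (-(k : ℤ) - 1)) (w 0)), ← zpow_add_one_apply, sub_add_cancel]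

theorem exists_forall_add_one_sub_eq (T : M ≃L[R] M) (g : ℤ → M) :
    ∃ x : ℤ → M, ∀ n, x (n + 1) - T (x n) = g n := by
  -- variation of constants: look for `x n = T ^ n (s n)`
  obtain ⟨s, hs⟩ := Int.exists_forall_add_one_sub_eq fun n => (T ^ (-(n + 1))) (g n)
  refine ⟨fun n => (T ^ n) (s n), fun n => ?_⟩
  change (T ^ (n + 1)) (s (n + 1)) - T ((T ^ n) (s n)) = g n
  rw [← T.zpow_add_one_apply, ← _root_.map_sub, hs]
  change (T ^ (n + 1) * T ^ (-(n + 1))) (g n) = g n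
  rw [← zpow_add, add_neg_cancel, zpow_zero]
  rfl

end ContinuousLinearEquiv

section Shadowing

variable {B : Type*} [NormedAddCommGroup B] [NormedSpace ℝ B]

theorem Shadowing.exists_bounded_forall_add_one_sub_eq {T : B ≃L[ℝ] B} (hT : Shadowing T) :
    ∃ δ > 0, ∀ g : ℤ → B, (∀ n, ‖g n‖ < δ) →
      ∃ u : ℤ → B, (∀ n, ‖u n‖ < 1) ∧ ∀ n, u (n + 1) - T (u n) = g n := by
  obtain ⟨δ, hδ, hshadow⟩ := hT 1 one_pos
  refine ⟨δ, hδ, fun g hg => ?_⟩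
  obtain ⟨x, hx⟩ := T.exists_forall_add_one_sub_eq g
  obtain ⟨y, hy⟩ := hshadow x fun n => hx n ▸ hg n
  refine ⟨fun n => x n - (T ^ n) y, hy, fun n => ?_⟩
  dsimp only
  rw [T.zpow_add_one_apply, ← hx n, map_sub]
  abel

theorem Shadowing.surjective_Tinf {T : B ≃L[ℝ] B} (hT : Shadowing T) : Surjective (Tinf T) := by
  obtain ⟨δ, hδ, hsolve⟩ := hT.exists_bounded_forall_add_one_sub_eq
  rintro ⟨z, C, hC⟩
  have hC0 : 0 ≤ C := (norm_nonneg _).trans (hC 0)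
  set c := δ / (C + 1)
  have hc : 0 < c := by positivity
  obtain ⟨u, hu, hu_eq⟩ := hsolve (fun n => c • z n) fun n => by
    calc ‖c • z n‖ = c * ‖z n‖ := by rw [norm_smul, Real.norm_of_nonneg hc.le]
      _ ≤ c * C := by gcongr; exact hC n
      _ < δ := by
        rw [div_mul_eq_mul_div, div_lt_iff₀ (by positivity)]
        exact mul_lt_mul_of_pos_left (lt_add_one C) hδ
  refine ⟨⟨fun n => c⁻¹ • u n, c⁻¹, fun n => ?_⟩, ?_⟩
  · rw [norm_smul, Real.norm_of_nonneg (inv_nonneg.2 hc.le)]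
    exact mul_le_of_le_one_right (by positivity) (hu n).le
  · refine Subtype.ext (funext fun n => ?_)
    change c⁻¹ • u (n + 1) - T (c⁻¹ • u n) = z n
    rw [map_smul, ← smul_sub, hu_eq, inv_smul_smul₀ hc.ne']

theorem norm_apply_add_one_sub_le (T : B ≃L[ℝ] B) (f : ℤ →ᵇ B) (n : ℤ) :
    ‖f (n + 1) - T (f n)‖ ≤ (1 + ‖(T : B →L[ℝ] B)‖) * ‖f‖ :=
  calc ‖f (n + 1) - T (f n)‖ ≤ ‖f (n + 1)‖ + ‖(T : B →L[ℝ] B) (f n)‖ := norm_sub_le _ _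
    _ ≤ ‖f‖ + ‖(T : B →L[ℝ] B)‖ * ‖f‖ :=
      add_le_add (f.norm_coe_le_norm _) ((T : B →L[ℝ] B).le_of_opNorm_le le_rfl _ |>.trans
        (by gcongr; exact f.norm_coe_le_norm _))
    _ = (1 + ‖(T : B →L[ℝ] B)‖) * ‖f‖ := by ring

/-- `T_∞` as an operator on the Banach space `ℤ →ᵇ B`, where the open mapping theorem applies. -/
noncomputable def tinfCLM (T : B ≃L[ℝ] B) : (ℤ →ᵇ B) →L[ℝ] (ℤ →ᵇ B) :=
  LinearMap.mkContinuous
    { toFun f := ofNormedAddCommGroupDiscrete (fun n => f (n + 1) - T (f n)) _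
        (norm_apply_add_one_sub_le T f)
      map_add' f g := by
        ext n
        simp only [coe_ofNormedAddCommGroupDiscrete, coe_add, Pi.add_apply, map_add]
        abel
      map_smul' c f := by
        ext n
        simp only [coe_ofNormedAddCommGroupDiscrete, coe_smul, map_smul, RingHom.id_apply,
          smul_sub] }
    (1 + ‖(T : B →L[ℝ] B)‖) fun f => (norm_le (by positivity)).2 (norm_apply_add_one_sub_le T f)

theorem tinfCLM_apply (T : B ≃L[ℝ] B) (f : ℤ →ᵇ B) (n : ℤ) :
    tinfCLM T f n = f (n + 1) - T (f n) := rfl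

theorem surjective_tinfCLM_of_surjective_Tinf {T : B ≃L[ℝ] B} (h : Surjective (Tinf T)) :
    Surjective (tinfCLM T) := by
  intro g
  obtain ⟨⟨x, C, hC⟩, hx⟩ := h ⟨g, ‖g‖, g.norm_coe_le_norm⟩
  exact ⟨ofNormedAddCommGroupDiscrete x C hC, ext fun n => congrFun (congrArg Subtype.val hx) n⟩

theorem shadowing_of_surjective_tinfCLM [CompleteSpace B] {T : B ≃L[ℝ] B}
    (h : Surjective (tinfCLM T)) : Shadowing T := by
  obtain ⟨M, hM, hpre⟩ := (tinfCLM T).exists_preimage_norm_le h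
  intro ε hε
  refine ⟨ε / (2 * M), by positivity, fun x hx => ?_⟩
  let g : ℤ →ᵇ B := ofNormedAddCommGroupDiscrete _ _ fun n => (hx n).le
  obtain ⟨f, hf, hf_le⟩ := hpre g
  have hf_norm : ‖f‖ < ε :=
    calc ‖f‖ ≤ M * ‖g‖ := hf_le
      _ ≤ M * (ε / (2 * M)) := by gcongr; exact (norm_le (by positivity)).2 fun n => (hx n).le
      _ = ε / 2 := by field_simp
      _ < ε := half_lt_self hε
  have h_orbit : ∀ n, x (n + 1) - f (n + 1) = T (x n - f n) := fun n => by
    have hf_n := DFunLike.congr_fun hf n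
    rw [tinfCLM_apply] at hf_n
    rw [map_sub, sub_eq_sub_iff_sub_eq_sub, hf_n]
    rfl
  refine ⟨x 0 - f 0, fun n => ?_⟩
  rw [← T.eq_zpow_apply_of_forall_add_one (w := fun n => x n - f n) h_orbit n, sub_sub_cancel]
  exact (f.norm_coe_le_norm n).trans_lt hf_norm

end Shadowing

/-- `T` has the shadowing property iff `T_∞` is surjective. -/
theorem stmt3 {B : Type*} [NormedAddCommGroup B] [NormedSpace ℝ B] [CompleteSpace B]
    (T : B ≃L[ℝ] B) :
    Shadowing T ↔ Function.Surjective (Tinf T) :=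
  ⟨Shadowing.surjective_Tinf, fun h => shadowing_of_surjective_tinfCLM
    (surjective_tinfCLM_of_surjective_Tinf h)⟩
end

section
/- Let T be a generalized hyperbolic operator on B. If x ∈ ker p where p : B → B/closure(B(T)) is the quotient map (i.e. x ∈ closure(B(T))), then Π⁺x and Π⁻x also lie in closure(B(T)). Consequently the projections Π⁺, Π⁻ descend to bounded projections on B/closure(B(T)), giving a direct sum decomposition B/closure(B(T)) = p(E⁺) ⊕ p(E⁻). -/
/-- The bounded set of T: points with infinitely many forward iterates and infinitely
many backward iterates of norm bounded by some constant K(x). -/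
def BoundedSet {B : Type*} [NormedAddCommGroup B] [NormedSpace ℝ B]
    (T : B ≃L[ℝ] B) : Set B :=
  {x | ∃ K : ℝ,
    (∀ N : ℕ, ∃ n : ℕ, N ≤ n ∧ ‖(T ^ (n : ℤ)) x‖ < K) ∧
    (∀ N : ℕ, ∃ n : ℕ, N ≤ n ∧ ‖(T ^ (-(n : ℤ))) x‖ < K)}

lemma zpow_succ_apply' {B : Type*} [NormedAddCommGroup B] [NormedSpace ℝ B]
    (T : B ≃L[ℝ] B) (n : ℕ) (x : B) :
    (T ^ ((n:ℤ)+1)) x = T ((T ^ (n:ℤ)) x) := by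
  rw [show ((n:ℤ)+1) = 1 + n by ring, zpow_add, zpow_one]; rfl

lemma zpow_negsucc_apply' {B : Type*} [NormedAddCommGroup B] [NormedSpace ℝ B]
    (T : B ≃L[ℝ] B) (n : ℕ) (x : B) :
    (T ^ (-((n:ℤ)+1))) x = T.symm ((T ^ (-(n:ℤ))) x) := by
  rw [show (-((n:ℤ)+1)) = -1 + -(n:ℤ) by ring, zpow_add, zpow_neg_one]; rfl

/-- the projections Π⁺, Π⁻ preserve the closure of the bounded set, and
hence descend to bounded projections on the quotient B/closure(B(T)), giving a direct
sum decomposition of the quotient into the images of E⁺ and E⁻. -/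
theorem stmt14 {B : Type*} [NormedAddCommGroup B] [NormedSpace ℝ B] [CompleteSpace B]
    (T : B ≃L[ℝ] B) (Em Ep : Submodule ℝ B)
    (hEmc : IsClosed (Em : Set B)) (hEpc : IsClosed (Ep : Set B))
    (hcompl : IsCompl Em Ep)
    (hTEp : ∀ x ∈ Ep, T x ∈ Ep) (hTEm : ∀ x ∈ Em, T.symm x ∈ Em)
    (lam : ℝ) (hlam0 : 0 < lam) (hlam1 : lam < 1)
    (hcon : ∀ x ∈ Ep, ‖T x‖ ≤ lam * ‖x‖) (hexp : ∀ x ∈ Em, ‖T.symm x‖ ≤ lam * ‖x‖)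
    (Pp Pm : B →L[ℝ] B)
    (hP : ∀ x : B, Pp x ∈ Ep ∧ Pm x ∈ Em ∧ Pp x + Pm x = x)
    (C : Submodule ℝ B) (hC : (C : Set B) = closure (BoundedSet T)) :
    (∀ x : B, x ∈ C → Pp x ∈ C ∧ Pm x ∈ C) ∧
    ∃ pp pm : (B ⧸ C) →L[ℝ] (B ⧸ C),
      (∀ x : B, pp (Submodule.Quotient.mk x) = Submodule.Quotient.mk (Pp x)) ∧
      (∀ x : B, pm (Submodule.Quotient.mk x) = Submodule.Quotient.mk (Pm x)) ∧
      pp + pm = 1 ∧ pp.comp pp = pp ∧ pm.comp pm = pm ∧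
      IsCompl (Submodule.map C.mkQ Ep) (Submodule.map C.mkQ Em) := by
  -- projections fix their ranges
  have hPfix : ∀ a : B, (a ∈ Ep → Pp a = a ∧ Pm a = 0) ∧ (a ∈ Em → Pm a = a ∧ Pp a = 0) := by
    intro a
    obtain ⟨h1, h2, h3⟩ := hP a
    constructor
    · intro ha
      have hmem : Pm a ∈ Em ⊓ Ep := by
        refine ⟨h2, ?_⟩
        have : Pm a = a - Pp a := by rw [eq_sub_iff_add_eq, add_comm]; exact h3
        rw [this]; exact Submodule.sub_mem _ ha h1
      have h0 : Pm a = 0 := by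
        have := hcompl.inf_eq_bot
        rw [this] at hmem; simpa using hmem
      refine ⟨?_, h0⟩
      have h3' := h3; rw [h0, add_zero] at h3'; exact h3'
    · intro ha
      have hmem : Pp a ∈ Em ⊓ Ep := by
        refine ⟨?_, h1⟩
        have : Pp a = a - Pm a := by rw [eq_sub_iff_add_eq]; exact h3
        rw [this]; exact Submodule.sub_mem _ ha h2
      have h0 : Pp a = 0 := by
        have := hcompl.inf_eq_bot
        rw [this] at hmem; simpa using hmem
      refine ⟨?_, h0⟩
      have h3' := h3; rw [h0, zero_add] at h3'; exact h3'
  -- forward iterates of points in Ep stay in Ep with non-increasing norm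
  have hfor : ∀ y ∈ Ep, ∀ n : ℕ, (T ^ (n:ℤ)) y ∈ Ep ∧ ‖(T ^ (n:ℤ)) y‖ ≤ ‖y‖ := by
    intro y hy n
    induction n with
    | zero =>
      simp only [Nat.cast_zero, zpow_zero]
      exact ⟨hy, le_refl _⟩
    | succ n ih =>
      have heq : (T ^ ((n+1:ℕ):ℤ)) y = T ((T ^ (n:ℤ)) y) := by
        push_cast
        exact zpow_succ_apply' T n y
      constructor
      · rw [heq]; exact hTEp _ ih.1
      · rw [heq]
        calc ‖T ((T ^ (n:ℤ)) y)‖ ≤ lam * ‖(T ^ (n:ℤ)) y‖ := hcon _ ih.1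
          _ ≤ ‖(T ^ (n:ℤ)) y‖ := by nlinarith [norm_nonneg ((T ^ (n:ℤ)) y)]
          _ ≤ ‖y‖ := ih.2
  -- backward iterates of points in Em stay in Em with non-increasing norm
  have hback : ∀ y ∈ Em, ∀ n : ℕ, (T ^ (-(n:ℤ))) y ∈ Em ∧ ‖(T ^ (-(n:ℤ))) y‖ ≤ ‖y‖ := by
    intro y hy n
    induction n with
    | zero =>
      simp only [Nat.cast_zero, neg_zero, zpow_zero]
      exact ⟨hy, le_refl _⟩
    | succ n ih =>
      have heq : (T ^ (-((n+1:ℕ):ℤ))) y = T.symm ((T ^ (-(n:ℤ))) y) := by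
        push_cast
        exact zpow_negsucc_apply' T n y
      constructor
      · rw [heq]; exact hTEm _ ih.1
      · rw [heq]
        calc ‖T.symm ((T ^ (-(n:ℤ))) y)‖ ≤ lam * ‖(T ^ (-(n:ℤ))) y‖ := hexp _ ih.1
          _ ≤ ‖(T ^ (-(n:ℤ))) y‖ := by nlinarith [norm_nonneg ((T ^ (-(n:ℤ))) y)]
          _ ≤ ‖y‖ := ih.2
  -- the projections preserve the bounded set
  have hBS : ∀ x ∈ BoundedSet T, Pp x ∈ BoundedSet T ∧ Pm x ∈ BoundedSet T := by
    intro x hx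
    obtain ⟨K, hf, hb⟩ := hx
    obtain ⟨hPpx, hPmx, hsum⟩ := hP x
    have hK0 : 0 < K := by
      obtain ⟨n, -, hn⟩ := hf 0
      exact lt_of_le_of_lt (norm_nonneg _) hn
    set K' : ℝ := K + ‖Pp x‖ + ‖Pm x‖ + 1 with hK'
    have hK'Pp : ‖Pp x‖ < K' := by
      have := norm_nonneg (Pm x); linarith
    have hK'Pm : ‖Pm x‖ < K' := by
      have := norm_nonneg (Pp x); linarith
    constructor
    · refine ⟨K', ?_, ?_⟩
      · intro N
        exact ⟨N, le_refl N, lt_of_le_of_lt (hfor _ hPpx N).2 hK'Pp⟩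
      · intro N
        obtain ⟨n, hn, hnorm⟩ := hb N
        refine ⟨n, hn, ?_⟩
        have hd : (T ^ (-(n:ℤ))) (Pp x) = (T ^ (-(n:ℤ))) x - (T ^ (-(n:ℤ))) (Pm x) := by
          rw [← map_sub]
          congr 1
          rw [eq_sub_iff_add_eq]; exact hsum
        rw [hd]
        calc ‖(T ^ (-(n:ℤ))) x - (T ^ (-(n:ℤ))) (Pm x)‖
            ≤ ‖(T ^ (-(n:ℤ))) x‖ + ‖(T ^ (-(n:ℤ))) (Pm x)‖ := norm_sub_le _ _
          _ < K + ‖Pm x‖ := by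
              have := (hback _ hPmx n).2
              linarith
          _ ≤ K' := by have := norm_nonneg (Pp x); linarith
    · refine ⟨K', ?_, ?_⟩
      · intro N
        obtain ⟨n, hn, hnorm⟩ := hf N
        refine ⟨n, hn, ?_⟩
        have hd : (T ^ (n:ℤ)) (Pm x) = (T ^ (n:ℤ)) x - (T ^ (n:ℤ)) (Pp x) := by
          rw [← map_sub]
          congr 1
          rw [eq_sub_iff_add_eq, add_comm]; exact hsum
        rw [hd]
        calc ‖(T ^ (n:ℤ)) x - (T ^ (n:ℤ)) (Pp x)‖
            ≤ ‖(T ^ (n:ℤ)) x‖ + ‖(T ^ (n:ℤ)) (Pp x)‖ := norm_sub_le _ _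
          _ < K + ‖Pp x‖ := by
              have := (hfor _ hPpx n).2
              linarith
          _ ≤ K' := by have := norm_nonneg (Pm x); linarith
      · intro N
        exact ⟨N, le_refl N, lt_of_le_of_lt (hback _ hPmx N).2 hK'Pm⟩
  -- the projections preserve C = closure of the bounded set
  have hCl : ∀ x : B, x ∈ C → Pp x ∈ C ∧ Pm x ∈ C := by
    intro x hx
    have hx' : x ∈ closure (BoundedSet T) := by rw [← hC]; exact hx
    constructor
    · show Pp x ∈ (C : Set B)
      rw [hC]
      exact map_mem_closure Pp.continuous hx' (fun y hy => (hBS y hy).1)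
    · show Pm x ∈ (C : Set B)
      rw [hC]
      exact map_mem_closure Pm.continuous hx' (fun y hy => (hBS y hy).2)
  refine ⟨hCl, ?_⟩
  -- construct the descended projections
  have hkerp : C ≤ LinearMap.ker (C.mkQ ∘ₗ (Pp : B →ₗ[ℝ] B)) := by
    intro x hx
    simp only [LinearMap.mem_ker, LinearMap.comp_apply, ContinuousLinearMap.coe_coe,
      Submodule.mkQ_apply, Submodule.Quotient.mk_eq_zero]
    exact (hCl x hx).1
  have hkerm : C ≤ LinearMap.ker (C.mkQ ∘ₗ (Pm : B →ₗ[ℝ] B)) := by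
    intro x hx
    simp only [LinearMap.mem_ker, LinearMap.comp_apply, ContinuousLinearMap.coe_coe,
      Submodule.mkQ_apply, Submodule.Quotient.mk_eq_zero]
    exact (hCl x hx).2
  set ppl : (B ⧸ C) →ₗ[ℝ] (B ⧸ C) := C.liftQ (C.mkQ ∘ₗ (Pp : B →ₗ[ℝ] B)) hkerp with hppl
  set pml : (B ⧸ C) →ₗ[ℝ] (B ⧸ C) := C.liftQ (C.mkQ ∘ₗ (Pm : B →ₗ[ℝ] B)) hkerm with hpml
  have hmkc : Continuous C.mkQ := continuous_quot_mk
  have hpplc : Continuous ppl := by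
    rw [← C.isOpenQuotientMap_mkQ.continuous_comp_iff]
    exact hmkc.comp Pp.continuous
  have hpmlc : Continuous pml := by
    rw [← C.isOpenQuotientMap_mkQ.continuous_comp_iff]
    exact hmkc.comp Pm.continuous
  refine ⟨⟨ppl, hpplc⟩, ⟨pml, hpmlc⟩, ?_, ?_, ?_, ?_, ?_, ?_⟩
  · intro x; rfl
  · intro x; rfl
  · ext q
    obtain ⟨x, rfl⟩ := Submodule.Quotient.mk_surjective C q
    show ppl (Submodule.Quotient.mk x) + pml (Submodule.Quotient.mk x) = Submodule.Quotient.mk x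
    show Submodule.Quotient.mk (Pp x) + Submodule.Quotient.mk (Pm x) = Submodule.Quotient.mk x
    rw [← Submodule.Quotient.mk_add, (hP x).2.2]
  · ext q
    obtain ⟨x, rfl⟩ := Submodule.Quotient.mk_surjective C q
    show ppl (ppl (Submodule.Quotient.mk x)) = ppl (Submodule.Quotient.mk x)
    show Submodule.Quotient.mk (Pp (Pp x)) = Submodule.Quotient.mk (Pp x)
    rw [((hPfix (Pp x)).1 (hP x).1).1]
  · ext q
    obtain ⟨x, rfl⟩ := Submodule.Quotient.mk_surjective C q
    show pml (pml (Submodule.Quotient.mk x)) = pml (Submodule.Quotient.mk x)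
    show Submodule.Quotient.mk (Pm (Pm x)) = Submodule.Quotient.mk (Pm x)
    rw [((hPfix (Pm x)).2 (hP x).2.1).1]
  · constructor
    · rw [Submodule.disjoint_def]
      intro q hqp hqm
      obtain ⟨a, ha, rfl⟩ := hqp
      obtain ⟨b, hb, hab⟩ := hqm
      have h1 : ppl (C.mkQ a) = C.mkQ a := by
        show Submodule.Quotient.mk (Pp a) = Submodule.Quotient.mk a
        rw [((hPfix a).1 ha).1]
      have h2 : ppl (C.mkQ b) = 0 := by
        show Submodule.Quotient.mk (Pp b) = 0
        rw [((hPfix b).2 hb).2]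
        exact Submodule.Quotient.mk_zero C
      rw [← h1, ← hab, h2]
    · rw [codisjoint_iff, ← Submodule.map_sup, sup_comm, hcompl.sup_eq_top,
        Submodule.map_top, Submodule.range_mkQ]
end
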